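/- arXiv:2509.11137 — 5 statements merged into one kernel-verified Lean document; each statement's English description precedes it below -/
import Mathlib

section
/- Let n1, n2 be coprime integers with 3 | n1, and set Δ = n1^2 + 3·n1·n2 + 9·n2^2. If 9 exactly divides Δ (i.e. 9 | Δ but 27 ∤ Δ) and Δ/9 is squarefree, then Δ/9 and 2·n1 + 3·n2 are coprime. -/
/-!
Write `n1 = 3 m`, so that `Δ = 9 D` with `D = m² + m n2 + n2²` and `2 n1 + 3 n2 = 3 (2 m + n2)`.
Since `27 ∤ Δ`, `D` is prime to `3`, and `D` is prime to `2 m + n2` because of the identity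
`(2 m + n2)² = 4 D - 3 n2²` together with `gcd(D, n2) = gcd(m², n2) = 1`.
-/

section Eisenstein

variable {R : Type*} [CommRing R] {m n : R}

theorem IsCoprime.sq_add_mul_add_sq_left (h : IsCoprime m n) :
    IsCoprime (m ^ 2 + m * n + n ^ 2) n := by
  have := (h.pow_left (m := 2)).add_mul_right_left (m + n)
  rwa [show m ^ 2 + (m + n) * n = m ^ 2 + m * n + n ^ 2 by ring] at this

theorem IsCoprime.sq_add_mul_add_sq_two_mul_add (h : IsCoprime m n)
    (h3 : IsCoprime (m ^ 2 + m * n + n ^ 2) 3) :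
    IsCoprime (m ^ 2 + m * n + n ^ 2) (2 * m + n) := by
  set D := m ^ 2 + m * n + n ^ 2 with hD
  have hn : IsCoprime D (3 * n ^ 2) := h3.mul_right h.sq_add_mul_add_sq_left.pow_right
  have hsq : (2 * m + n) ^ 2 = -(3 * n ^ 2) + D * 4 := by rw [hD]; ring
  have := hn.neg_right.add_mul_left_right 4
  rw [← hsq] at this
  exact (IsCoprime.pow_right_iff two_pos).mp this

end Eisenstein

theorem delta_div_nine_coprime_general (n1 n2 : ℤ) (hcop : IsCoprime n1 n2) (h3 : (3 : ℤ) ∣ n1)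
    (Δ : ℤ) (hΔ : Δ = n1 ^ 2 + 3 * n1 * n2 + 9 * n2 ^ 2)
    (h27 : ¬ (27 : ℤ) ∣ Δ) :
    IsCoprime (Δ / 9) (2 * n1 + 3 * n2) := by
  obtain ⟨m, rfl⟩ := h3
  set D := m ^ 2 + m * n2 + n2 ^ 2
  have hΔD : Δ = 9 * D := by rw [hΔ]; ring
  have hD3 : IsCoprime D 3 := by
    refine ((Irreducible.coprime_iff_not_dvd Int.prime_three.irreducible).mpr ?_).symm
    rintro ⟨k, hk⟩
    exact h27 ⟨k, by rw [hΔD, hk]; ring⟩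
  have hmn : IsCoprime m n2 := hcop.of_mul_left_right
  rw [hΔD, Int.mul_ediv_cancel_left _ (by norm_num),
    show 2 * (3 * m) + 3 * n2 = 3 * (2 * m + n2) by ring]
  exact hD3.mul_right (hmn.sq_add_mul_add_sq_two_mul_add hD3)

/-- If `n1, n2` are coprime integers with `3 ∣ n1`, `Δ = n1^2 + 3 n1 n2 + 9 n2^2`
satisfies `9 ∥ Δ` and `Δ/9` squarefree, then `Δ/9` and `2 n1 + 3 n2` are coprime. -/
theorem delta_div_nine_coprime (n1 n2 : ℤ) (hcop : IsCoprime n1 n2) (h3 : (3 : ℤ) ∣ n1)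
    (Δ : ℤ) (hΔ : Δ = n1 ^ 2 + 3 * n1 * n2 + 9 * n2 ^ 2)
    (h9 : (9 : ℤ) ∣ Δ) (h27 : ¬ (27 : ℤ) ∣ Δ) (hsf : Squarefree (Δ / 9)) :
    IsCoprime (Δ / 9) (2 * n1 + 3 * n2) :=
  delta_div_nine_coprime_general n1 n2 hcop h3 Δ hΔ h27
end

section
/- Let n1, n2 be coprime integers with 3 | n1, set n = n1/n2 and Δ = n1^2 + 3·n1·n2 + 9·n2^2. If 9 exactly divides Δ and Δ/9 is squarefree, then Shanks' cubic polynomial f_n(X) = X^3 - nX^2 - (n+3)X - 1 is irreducible over ℚ. -/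
/-!
A cubic is irreducible over `ℚ` iff it has no rational root. If `a / b` (in lowest terms) were
a root of `f_n`, clearing denominators gives `n₂ G = n₁ H` with `G = a³ - 3ab² - b³` and
`H = ab(a + b)`. The forms `G` and `H` are coprime, so `(n₁, n₂) = ±(G, H)`, and then
`Δ = G² + 3GH + 9H² = (a² + ab + b²)³` is a cube. A cube divisible by `9` is divisible by `27`.
-/

open Polynomial

section CommRing

variable {R : Type*} [CommRing R]

theorem IsCoprime.exists_eq_mul_of_mul_eq_mul {x y x' y' : R} (h : IsCoprime x y)
    (hxy : x * y' = x' * y) : ∃ u : R, x' = u * x ∧ y' = u * y := by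
  obtain ⟨s, t, hst⟩ := h
  refine ⟨s * x' + t * y', ?_, ?_⟩
  · linear_combination (-x') * hst - t * hxy
  · linear_combination (-y') * hst + s * hxy

theorem IsCoprime.exists_isUnit_of_mul_eq_mul {x y x' y' : R} (h : IsCoprime x y)
    (h' : IsCoprime x' y') (hxy : x * y' = x' * y) :
    ∃ u : R, IsUnit u ∧ x' = u * x ∧ y' = u * y := by
  obtain ⟨u, rfl, rfl⟩ := h.exists_eq_mul_of_mul_eq_mul hxy
  obtain ⟨v, hx, hy⟩ := h'.exists_eq_mul_of_mul_eq_mul hxy.symm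
  refine ⟨u, IsUnit.of_mul_eq_one v ?_, rfl, rfl⟩
  obtain ⟨s, t, hst⟩ := h
  linear_combination (1 - u * v) * hst - s * hx - t * hy

-- `G ≡ -b³ (mod a)`, `G ≡ a³ (mod b)` and `G ≡ b³ (mod a + b)`.
theorem isCoprime_shanks_forms {a b : R} (hab : IsCoprime a b) :
    IsCoprime (a ^ 3 - 3 * a * b ^ 2 - b ^ 3) (a * b * (a + b)) := by
  have ha : IsCoprime (a ^ 3 - 3 * a * b ^ 2 - b ^ 3) a := by
    convert (hab.symm.pow_left (m := 3)).neg_left.add_mul_left_left (a ^ 2 - 3 * b ^ 2) using 1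
    ring
  have hb : IsCoprime (a ^ 3 - 3 * a * b ^ 2 - b ^ 3) b := by
    convert (hab.pow_left (m := 3)).add_mul_left_left (-3 * a * b - b ^ 2) using 1
    ring
  have hab' : IsCoprime (a ^ 3 - 3 * a * b ^ 2 - b ^ 3) (a + b) := by
    convert ((hab.symm.add_mul_left_right 1).pow_left (m := 3)).add_mul_left_left
      (a ^ 2 - a * b - 2 * b ^ 2) using 1 <;> ring
  exact (ha.mul_right hb).mul_right hab'

theorem shanks_forms_disc_eq_cube (a b : R) :
    (a ^ 3 - 3 * a * b ^ 2 - b ^ 3) ^ 2 + 3 * (a ^ 3 - 3 * a * b ^ 2 - b ^ 3) * (a * b * (a + b))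
      + 9 * (a * b * (a + b)) ^ 2 = (a ^ 2 + a * b + b ^ 2) ^ 3 := by
  ring

end CommRing

theorem mul_pow_three_mul_eval_div_shanks_cubic {K : Type*} [Field K] {a b n1 n2 : K}
    (hb : b ≠ 0) (hn2 : n2 ≠ 0) :
    n2 * b ^ 3 * (X ^ 3 - C (n1 / n2) * X ^ 2 - C (n1 / n2 + 3) * X - 1).eval (a / b) =
      n2 * (a ^ 3 - 3 * a * b ^ 2 - b ^ 3) - n1 * (a * b * (a + b)) := by
  simp only [eval_sub, eval_mul, eval_pow, eval_C, eval_X, eval_one]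
  field_simp
  ring

theorem Rat.shanks_forms_relation_of_isRoot {n1 n2 : ℤ} (hn2 : n2 ≠ 0) {r : ℚ}
    (hr : (X ^ 3 - C ((n1 : ℚ) / n2) * X ^ 2 - C ((n1 : ℚ) / n2 + 3) * X - 1).IsRoot r) :
    n2 * (r.num ^ 3 - 3 * r.num * r.den ^ 2 - r.den ^ 3) =
      n1 * (r.num * r.den * (r.num + r.den)) := by
  have h := mul_pow_three_mul_eval_div_shanks_cubic (a := (r.num : ℚ)) (b := (r.den : ℚ))
    (n1 := (n1 : ℚ)) (n2 := (n2 : ℚ)) (by positivity) (by exact_mod_cast hn2)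
  rw [Rat.num_div_den, hr.eq_zero, mul_zero, eq_comm, sub_eq_zero] at h
  exact_mod_cast h

theorem Int.disc_eq_cube_of_shanks_forms_relation {n1 n2 a b : ℤ} (hcop : IsCoprime n1 n2)
    (hab : IsCoprime a b)
    (hrel : n2 * (a ^ 3 - 3 * a * b ^ 2 - b ^ 3) = n1 * (a * b * (a + b))) :
    n1 ^ 2 + 3 * n1 * n2 + 9 * n2 ^ 2 = (a ^ 2 + a * b + b ^ 2) ^ 3 := by
  obtain ⟨u, hu, rfl, rfl⟩ :=
    (isCoprime_shanks_forms hab).exists_isUnit_of_mul_eq_mul hcop (by linear_combination hrel)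
  linear_combination (a ^ 2 + a * b + b ^ 2) ^ 3 * Int.isUnit_sq hu +
    u ^ 2 * shanks_forms_disc_eq_cube a b

theorem shanks_cubic_irreducible_general (n1 n2 : ℤ) (hn2 : n2 ≠ 0) (hcop : IsCoprime n1 n2)
    (Δ : ℤ) (hΔ : Δ = n1 ^ 2 + 3 * n1 * n2 + 9 * n2 ^ 2)
    (h9 : (9 : ℤ) ∣ Δ) (h27 : ¬ (27 : ℤ) ∣ Δ)
    (n : ℚ) (hn : n = (n1 : ℚ) / (n2 : ℚ)) :
    Irreducible (X ^ 3 - C n * X ^ 2 - C (n + 3) * X - 1) := by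
  have hmonic : (X ^ 3 - C n * X ^ 2 - C (n + 3) * X - 1 : ℚ[X]).Monic := by monicity!
  have hdeg : (X ^ 3 - C n * X ^ 2 - C (n + 3) * X - 1 : ℚ[X]).natDegree = 3 := by
    compute_degree!
  rw [hmonic.irreducible_iff_roots_eq_zero_of_degree_le_three (by omega) (by omega)]
  refine Multiset.eq_zero_of_forall_notMem fun r hr => ?_
  have hrel := Rat.shanks_forms_relation_of_isRoot hn2 (hn ▸ (mem_roots hmonic.ne_zero).mp hr)
  rw [hΔ, Int.disc_eq_cube_of_shanks_forms_relation hcop r.isCoprime_num_den hrel] at h9 h27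
  obtain ⟨k, hk⟩ := Int.prime_three.dvd_of_dvd_pow (dvd_trans (by norm_num) h9)
  exact h27 ⟨k ^ 3, by rw [hk]; ring⟩

/-- Under the hypotheses `gcd(n1,n2)=1`, `3 ∣ n1`, `9 ∥ Δ`, `Δ/9` squarefree,
Shanks' cubic polynomial `f_n` with `n = n1/n2` is irreducible over `ℚ`. -/
theorem shanks_cubic_irreducible (n1 n2 : ℤ) (hn2 : n2 ≠ 0) (hcop : IsCoprime n1 n2)
    (h3 : (3 : ℤ) ∣ n1) (Δ : ℤ) (hΔ : Δ = n1 ^ 2 + 3 * n1 * n2 + 9 * n2 ^ 2)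
    (h9 : (9 : ℤ) ∣ Δ) (h27 : ¬ (27 : ℤ) ∣ Δ) (hsf : Squarefree (Δ / 9))
    (n : ℚ) (hn : n = (n1 : ℚ) / (n2 : ℚ)) :
    Irreducible (X ^ 3 - C n * X ^ 2 - C (n + 3) * X - 1) :=
  shanks_cubic_irreducible_general n1 n2 hn2 hcop Δ hΔ h9 h27 n hn
end

section
/- For coprime integers n1, n2 with n2 ≠ 0 and n = n1/n2, the polynomial identity (3·n2)^3 · f_n(X/(3·n2) + n/3) = X^3 - 3·Δ·X - (2·n1 + 3·n2)·Δ holds in ℚ[X], where Δ = n1^2 + 3·n1·n2 + 9·n2^2. -/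
open Polynomial

/-! The shift `X ↦ X + n/3` kills the quadratic term of `f_n` (a Tschirnhaus substitution), and
rescaling `X` by `3 n2` clears the denominators of the resulting depressed cubic. -/

theorem shanks_cubic_comp_shift {K : Type*} [Field K] [CharZero K] (a b : K) (hb : b ≠ 0) :
    C (3 * b) ^ 3 *
      (X ^ 3 - C (a / b) * X ^ 2 - C (a / b + 3) * X - 1).comp
        (C (1 / (3 * b)) * X + C (a / b / 3)) =
      X ^ 3 - C (3 * (a ^ 2 + 3 * a * b + 9 * b ^ 2)) * X -
        C ((2 * a + 3 * b) * (a ^ 2 + 3 * a * b + 9 * b ^ 2)) := by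
  refine Polynomial.funext fun x => ?_
  simp only [eval_mul, eval_pow, eval_comp, eval_add, eval_sub, eval_C, eval_X, eval_one]
  field_simp
  ring

theorem shanks_cubic_transform_general (n1 n2 : ℤ) (hn2 : n2 ≠ 0)
    (n : ℚ) (hn : n = (n1 : ℚ) / (n2 : ℚ))
    (Δ : ℤ) (hΔ : Δ = n1 ^ 2 + 3 * n1 * n2 + 9 * n2 ^ 2) :
    C ((3 * n2 : ℤ) : ℚ) ^ 3 *
      (X ^ 3 - C n * X ^ 2 - C (n + 3) * X - 1).comp
        (C (1 / ((3 * n2 : ℤ) : ℚ)) * X + C (n / 3)) =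
      X ^ 3 - C (3 * (Δ : ℚ)) * X - C (((2 * n1 + 3 * n2 : ℤ) : ℚ) * (Δ : ℚ)) := by
  subst hn hΔ
  push_cast
  exact shanks_cubic_comp_shift _ _ (Int.cast_ne_zero.mpr hn2)

/-- The identity `(3 n2)^3 · f_n(X/(3 n2) + n/3) = X^3 - 3Δ·X - (2 n1 + 3 n2)·Δ`
in `ℚ[X]`, for `n = n1/n2` and `Δ = n1^2 + 3 n1 n2 + 9 n2^2`. -/
theorem shanks_cubic_transform (n1 n2 : ℤ) (hn2 : n2 ≠ 0) (hcop : IsCoprime n1 n2)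
    (n : ℚ) (hn : n = (n1 : ℚ) / (n2 : ℚ))
    (Δ : ℤ) (hΔ : Δ = n1 ^ 2 + 3 * n1 * n2 + 9 * n2 ^ 2) :
    C ((3 * n2 : ℤ) : ℚ) ^ 3 *
      (X ^ 3 - C n * X ^ 2 - C (n + 3) * X - 1).comp
        (C (1 / ((3 * n2 : ℤ) : ℚ)) * X + C (n / 3)) =
      X ^ 3 - C (3 * (Δ : ℚ)) * X - C (((2 * n1 + 3 * n2 : ℤ) : ℚ) * (Δ : ℚ)) :=
  shanks_cubic_transform_general n1 n2 hn2 n hn Δ hΔ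
end

section
/- Let p be an odd prime and let ζ_p be a primitive p-th root of unity. The ring homomorphism ψ : ℤ[X]/(X^p - 1) → ℤ[ζ_p] sending the class of X to ζ_p restricts to an injective group homomorphism on unit groups (ℤ[X]/(X^p - 1))^× → ℤ[ζ_p]^×. -/
/-!
Let `u` be a unit with `ψ u = 1` and lift it to `f ∈ ℤ[X]`. Since `Φ_p` is the minimal
polynomial of `ζ` over `ℤ`, `Φ_p ∣ f - 1`, so `f(1) ≡ 1 mod p`. Evaluation at `1` factors
through `ℤ[X]/(X^p - 1)`, so `f(1)` is a unit of `ℤ`, i.e. `±1`, and `p` odd forces `f(1) = 1`.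
Writing `f - 1 = Φ_p g`, evaluation at `1` gives `p g(1) = 0`, so `X - 1 ∣ g` and
`X^p - 1 = Φ_p (X - 1) ∣ f - 1`, i.e. `u = 1`.
-/

open Polynomial

namespace Polynomial

theorem cyclotomic_dvd_of_aeval_eq_zero {K : Type*} [Field K] [CharZero K] {n : ℕ} {μ : K}
    (hμ : IsPrimitiveRoot μ n) (hn : 0 < n) {f : ℤ[X]} (hf : aeval μ f = 0) :
    cyclotomic n ℤ ∣ f :=
  cyclotomic_eq_minpoly hμ hn ▸ minpoly.isIntegrallyClosed_dvd (hμ.isIntegral hn) hf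

theorem X_pow_sub_one_dvd_of_cyclotomic_dvd {R : Type*} [CommRing R] [IsDomain R] [CharZero R]
    {p : ℕ} [Fact p.Prime] {g : R[X]} (hΦ : cyclotomic p R ∣ g) (hg : g.eval 1 = 0) :
    X ^ p - 1 ∣ g := by
  obtain ⟨h, rfl⟩ := hΦ
  have hh : h.IsRoot 1 := by
    rw [eval_mul, eval_one_cyclotomic_prime] at hg
    exact (mul_eq_zero.mp hg).resolve_left (Nat.cast_ne_zero.mpr (Fact.out : p.Prime).ne_zero)
  rw [← cyclotomic_prime_mul_X_sub_one]
  exact mul_dvd_mul_left _ (by simpa using dvd_iff_isRoot.mpr hh)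

theorem isUnit_eval_one_of_isUnit_mk {R : Type*} [CommRing R] {n : ℕ} {f : R[X]}
    (hf : IsUnit (Ideal.Quotient.mk (Ideal.span {(X : R[X]) ^ n - 1}) f)) :
    IsUnit (f.eval 1) := by
  have hker : ∀ g ∈ Ideal.span {(X : R[X]) ^ n - 1}, evalRingHom (1 : R) g = 0 := by
    intro g hg
    obtain ⟨c, rfl⟩ := Ideal.mem_span_singleton'.mp hg
    simp
  have := hf.map (Ideal.Quotient.lift _ (evalRingHom 1) hker)
  rwa [Ideal.Quotient.lift_mk, coe_evalRingHom] at this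

theorem apply_mk_eq_aeval {A : Type*} [Ring A] {I : Ideal ℤ[X]} (ψ : ℤ[X] ⧸ I →+* A)
    (f : ℤ[X]) : ψ (Ideal.Quotient.mk I f) = aeval (ψ (Ideal.Quotient.mk I X)) f :=
  RingHom.congr_fun (f := ψ.comp (Ideal.Quotient.mk I))
    (g := (aeval (ψ (Ideal.Quotient.mk I X))).toRingHom)
    (ringHom_ext (fun a => by simp [eq_intCast]) (by simp)) f

end Polynomial

theorem Int.eq_one_of_isUnit_of_modEq_one {a n : ℤ} (hn : 2 < n) (ha : IsUnit a)
    (h : a ≡ 1 [ZMOD n]) : a = 1 := by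
  rcases Int.isUnit_iff.mp ha with rfl | rfl
  · rfl
  · have := Int.le_of_dvd two_pos ((Int.modEq_iff_dvd.mp h.symm).trans (by norm_num))
    omega

/-- For an odd prime `p` and a primitive `p`-th root of unity `ζ ∈ ℂ`, the ring
homomorphism `ℤ[X]/(X^p - 1) → ℂ` sending the class of `X` to `ζ` induces an
injective group homomorphism on unit groups. -/
theorem units_map_injective_of_cyclotomic_quotient (p : ℕ) (hp : p.Prime) (hodd : p ≠ 2)
    (ζ : ℂ) (hζ : IsPrimitiveRoot ζ p)
    (ψ : (Polynomial ℤ ⧸ Ideal.span {(X : Polynomial ℤ) ^ p - 1}) →+* ℂ)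
    (hψ : ψ (Ideal.Quotient.mk (Ideal.span {(X : Polynomial ℤ) ^ p - 1}) X) = ζ) :
    Function.Injective (Units.map ψ.toMonoidHom) := by
  have : Fact p.Prime := ⟨hp⟩
  refine (injective_iff_map_eq_one _).mpr fun w hw => Units.ext ?_
  obtain ⟨f, hf⟩ := Ideal.Quotient.mk_surjective (w : ℤ[X] ⧸ Ideal.span {(X : ℤ[X]) ^ p - 1})
  have hζf : aeval ζ f = 1 := by
    rw [← hψ, ← apply_mk_eq_aeval, hf]
    exact congrArg Units.val hw
  have hΦ : cyclotomic p ℤ ∣ f - 1 :=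
    cyclotomic_dvd_of_aeval_eq_zero hζ hp.pos (by rw [map_sub, hζf, map_one, sub_self])
  have hmod : f.eval 1 ≡ 1 [ZMOD p] := by
    refine (Int.modEq_iff_dvd.mpr ?_).symm
    simpa [eval_one_cyclotomic_prime] using eval_dvd (x := 1) hΦ
  have hf1 : f.eval 1 = 1 :=
    Int.eq_one_of_isUnit_of_modEq_one (by have := hp.two_le; omega)
      (isUnit_eval_one_of_isUnit_mk (hf ▸ w.isUnit)) hmod
  rw [Units.val_one, ← hf, ← map_one (Ideal.Quotient.mk _), Ideal.Quotient.eq,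
    Ideal.mem_span_singleton]
  exact X_pow_sub_one_dvd_of_cyclotomic_dvd hΦ (by simp [hf1])
end

section
/- The Gauss sum of the cubic character χ of conductor 9 defined by χ(a) = ζ_3^{(a^2-1)/3} for a coprime to 3 satisfies τ(χ)^3 = 27·ζ_3, where τ(χ) = ∑_{a ∈ (ℤ/9ℤ)^×} χ(a)·ζ_9^a and ζ_9 = e^{2πi/9}. -/
/-!
Since `3 ∣ a² - 1` for `3 ∤ a`, each term is `χ(a) ζ₉^a = ζ₉^(a² - 1 + a)`. For `a ≡ 1 (mod 3)` the
exponent is `≡ 1 (mod 9)`, while for `a = 2 + 3j` it is `≡ 5 + 6j`, so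
`τ(χ) = 3 ζ₉ + ζ₉⁵ (1 + ζ₃ + ζ₃²) = 3 ζ₉` and `τ(χ)³ = 27 ζ₉³ = 27 ζ₃`.
-/

open Finset

theorem ZMod.sum_units_val {n : ℕ} [NeZero n] {M : Type*} [AddCommMonoid M] (f : ℕ → M) :
    ∑ u : (ZMod n)ˣ, f (u : ZMod n).val = ∑ k ∈ (range n).filter (·.Coprime n), f k := by
  refine sum_bij' (fun u _ ↦ (u : ZMod n).val)
    (fun k hk ↦ ZMod.unitOfCoprime k (mem_filter.mp hk).2) ?_ (fun _ _ ↦ mem_univ _) ?_ ?_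
    (fun _ _ ↦ rfl)
  · intro u _
    simpa using ⟨ZMod.val_lt _, ZMod.val_coe_unit_coprime u⟩
  · intro u _
    simp [Units.ext_iff]
  · intro k hk
    simp [Nat.mod_eq_of_lt (mem_range.mp (mem_filter.mp hk).1)]

theorem pow_three_pow_sq_sub_one_div_three {M : Type*} [Monoid M] (ζ : M) {n : ℕ} (hn : ¬ 3 ∣ n) :
    (ζ ^ 3) ^ ((n ^ 2 - 1) / 3) = ζ ^ (n ^ 2 - 1) := by
  have hdvd : 3 ∣ n ^ 2 - 1 := by
    rcases (by omega : n % 3 = 1 ∨ n % 3 = 2) with h | h <;>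
    · apply Nat.dvd_of_mod_eq_zero
      rw [Nat.sub_mod_eq_zero_of_mod_eq]
      simp [Nat.pow_mod, h]
  rw [← pow_mul, Nat.mul_div_cancel' hdvd]

theorem IsPrimitiveRoot.sum_pow_sq_add_sub_one_nine {R : Type*} [CommRing R] [IsDomain R] {ζ : R}
    (hζ : IsPrimitiveRoot ζ 9) :
    ∑ k ∈ ({1, 2, 4, 5, 7, 8} : Finset ℕ), ζ ^ (k ^ 2 - 1 + k) = 3 * ζ := by
  have h3 : ∑ i ∈ range 3, (ζ ^ 3) ^ i = 0 :=
    (hζ.pow (by norm_num) rfl).geom_sum_eq_zero (by norm_num)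
  simp only [sum_range_succ, range_zero, sum_empty, ← pow_mul] at h3
  norm_num [sum_insert, pow_eq_pow_mod _ hζ.pow_eq_one]
  linear_combination ζ ^ 2 * h3

/-- The Gauss sum of the cubic character `χ` of conductor `9` given by
`χ(a) = ζ₃^{(a²-1)/3}` satisfies `τ(χ)³ = 27 ζ₃`, where `ζ₃ = ζ₉³`. -/
theorem gauss_sum_conductor_nine (ζ9 : ℂ) (hζ9 : IsPrimitiveRoot ζ9 9)
    (τ : ℂ)
    (hτ : τ = ∑ u : (ZMod 9)ˣ,
      (ζ9 ^ 3) ^ (((u : ZMod 9).val ^ 2 - 1) / 3) * ζ9 ^ (u : ZMod 9).val) :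
    τ ^ 3 = 27 * ζ9 ^ 3 := by
  have hτ_eq : τ = 3 * ζ9 :=
    calc τ = ∑ k ∈ (range 9).filter (·.Coprime 9), (ζ9 ^ 3) ^ ((k ^ 2 - 1) / 3) * ζ9 ^ k :=
          hτ.trans (ZMod.sum_units_val fun k ↦ (ζ9 ^ 3) ^ ((k ^ 2 - 1) / 3) * ζ9 ^ k)
      _ = ∑ k ∈ (range 9).filter (·.Coprime 9), ζ9 ^ (k ^ 2 - 1 + k) := by
          refine sum_congr rfl fun k hk ↦ ?_
          have hk3 : ¬ 3 ∣ k := (Nat.Prime.coprime_iff_not_dvd Nat.prime_three).mp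
            ((Nat.Coprime.coprime_dvd_right (by norm_num) (mem_filter.mp hk).2).symm)
          rw [pow_three_pow_sq_sub_one_div_three _ hk3, pow_add]
      _ = 3 * ζ9 := by
          rw [show (range 9).filter (·.Coprime 9) = {1, 2, 4, 5, 7, 8} by decide]
          exact hζ9.sum_pow_sq_add_sub_one_nine
  rw [hτ_eq]
  ring
end
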